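/- The derivative at t = 0 of the function t ↦ tr(log²(φ(t))), where φ(t) = Q⁻¹ P^{1/2} exp(t S) P^{1/2} for symmetric S, equals −2 tr(log(P^{−1/2} Q P^{−1/2}) S). -/

import Mathlib

/-!
Put `R = P^{1/2} Q⁻¹ P^{1/2}`, `W = V / 2` and `B(t) = e^{tW} R e^{tW}`. Then `φ(t)` is conjugate
to the positive definite matrix `B(t)` by `Q⁻¹ P^{1/2} e^{tW}`, so by the similarity property
`tr(log² φ(t)) = tr(log² B(t))`. On positive definite matrices, any logarithm inverting `exp` on
symmetric matrices is the functional-calculus logarithm, which has the integral representation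
`log B = ∫₀¹ (B - 1) K_s ds` with `K_s = (s(B - 1) + 1)⁻¹`. Differentiating under the integral
sign gives `D log_B (H) = ∫₀¹ K_s H K_s ds`; as `log B` commutes with every `K_s` and
`∫₀¹ K_s² ds = B⁻¹`, this is Moakher's formula `(tr log² B)' = 2 tr(log B · B⁻¹ B')`. At `t = 0`,
`B' = WR + RW`, so the derivative is `4 tr(log R · W) = 2 tr(log R · V)`, while
`log(P^{-1/2} Q P^{-1/2}) = log R⁻¹ = -log R`.
-/

open Matrix
open scoped Classical
open scoped MatrixOrder

/-- The symmetric positive definite square root of a positive definite matrix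
(junk value `1` otherwise). -/
noncomputable def msqrt {n : ℕ} (P : Matrix (Fin n) (Fin n) ℝ) : Matrix (Fin n) (Fin n) ℝ :=
  if h : P.PosDef then CFC.sqrt P else 1

open Set MeasureTheory NormedSpace

theorem Real.sub_one_mul_add_one_pos {x s : ℝ} (hx : 0 < x) (hs : s ∈ Icc (0 : ℝ) 1) :
    0 < s * (x - 1) + 1 := by
  nlinarith [hs.1, hs.2, mul_nonneg hs.1 hx.le]

theorem Real.log_eq_intervalIntegral {x : ℝ} (hx : 0 < x) :
    Real.log x = ∫ s in (0 : ℝ)..1, (x - 1) * (s * (x - 1) + 1)⁻¹ := by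
  rcases eq_or_ne x 1 with rfl | hx1
  · simp
  have h := intervalIntegral.integral_comp_mul_add (a := 0) (b := 1) (fun u : ℝ => u⁻¹)
    (sub_ne_zero.2 hx1) 1
  simp only [mul_zero, zero_add, mul_one, sub_add_cancel] at h
  simp_rw [intervalIntegral.integral_const_mul, mul_comm _ (x - 1), h,
    integral_inv_of_pos one_pos hx, smul_eq_mul, div_one, ← mul_assoc,
    mul_inv_cancel₀ (sub_ne_zero.2 hx1), one_mul]

namespace Matrix

theorem trace_conj_mul_conj {ι α : Type*} [Fintype ι] [DecidableEq ι] [CommRing α]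
    {A : Matrix ι ι α} (hA : IsUnit A.det) (X Y : Matrix ι ι α) :
    trace (A * X * A⁻¹ * (A * Y * A⁻¹)) = trace (X * Y) := by
  rw [show A * X * A⁻¹ * (A * Y * A⁻¹) = A * (X * Y) * A⁻¹ by
      simp only [mul_assoc, nonsing_inv_mul_cancel_left _ _ hA],
    trace_conj ((isUnit_iff_isUnit_det A).2 hA)]

theorem Commute.trace_mul_inv_mul_add {ι α : Type*} [Fintype ι] [DecidableEq ι] [CommRing α]
    {L R : Matrix ι ι α} (h : Commute L R) (hR : IsUnit R.det) (W : Matrix ι ι α) :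
    trace (L * R⁻¹ * (W * R + R * W)) = 2 * trace (L * W) := by
  have hWR : trace (L * R⁻¹ * (W * R)) = trace (L * W) := by
    rw [← mul_assoc, trace_mul_cycle, ← mul_assoc, ← h.eq, mul_nonsing_inv_cancel_right _ _ hR]
  rw [mul_add, trace_add, hWR, mul_assoc L, nonsing_inv_mul_cancel_left _ _ hR, two_mul]

theorem _root_.ContinuousOn.matrix_inv {ι 𝕜 α : Type*} [Fintype ι] [DecidableEq ι]
    [NormedField 𝕜] [TopologicalSpace α] {A : α → Matrix ι ι 𝕜} {s : Set α}
    (hA : ContinuousOn A s) (hdet : ∀ x ∈ s, IsUnit (A x).det) :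
    ContinuousOn (fun x => (A x)⁻¹) s := by
  intro x hx
  have hinv : ContinuousAt Ring.inverse (A x).det := by
    simpa [Ring.inverse_eq_inv'] using continuousAt_inv₀ (hdet x hx).ne_zero
  exact (continuousAt_matrix_inv _ hinv).comp_continuousWithinAt (hA x hx)

variable {ι : Type*} [DecidableEq ι]

theorem PosDef.smul_sub_one_add_one {B : Matrix ι ι ℝ} (hB : B.PosDef) {s : ℝ}
    (hs : s ∈ Icc (0 : ℝ) 1) : (s • (B - 1) + 1).PosDef := by
  rw [show s • (B - 1) + 1 = s • B + (1 - s) • 1 by rw [smul_sub, sub_smul, one_smul]; abel]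
  rcases eq_or_lt_of_le hs.1 with rfl | hs0
  · simpa using PosDef.one
  · exact (hB.smul hs0).add_posSemidef (PosSemidef.one.smul (sub_nonneg.2 hs.2))

variable [Fintype ι]

theorem PosDef.mul_mul_of_isSymm {A C : Matrix ι ι ℝ} (hA : A.PosDef) (hC : C.IsSymm)
    (hCdet : IsUnit C.det) : (C * A * C).PosDef := by
  have h := ((isUnit_iff_isUnit_det C).2 hCdet).posDef_star_left_conjugate_iff.2 hA
  rwa [star_eq_conjTranspose, conjTranspose_eq_transpose_of_trivial, hC.eq] at h

/- `CFC.log` and the derivative of the inverse need a normed ring structure on matrices; the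
statements below do not depend on which one is chosen. -/
open scoped Matrix.Norms.L2Operator

theorem _root_.HasDerivAt.matrix_inv {A : ℝ → Matrix ι ι ℝ} {A' : Matrix ι ι ℝ} {t : ℝ}
    (hA : HasDerivAt A A' t) (hdet : IsUnit (A t).det) :
    HasDerivAt (fun u => (A u)⁻¹) (-((A t)⁻¹ * A' * (A t)⁻¹)) t := by
  have hunit : IsUnit (A t) := (isUnit_iff_isUnit_det _).2 hdet
  simp_rw [nonsing_inv_eq_ringInverse]
  exact ((hasFDerivAt_ringInverse (𝕜 := ℝ) hunit.unit).comp_hasDerivAt t hA).congr_deriv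
    (by simp [nonsing_inv_eq_ringInverse])

theorem hasDerivAt_exp_smul_mul_mul_exp_smul (R W : Matrix ι ι ℝ) (t : ℝ) :
    HasDerivAt (fun u : ℝ => exp (u • W) * R * exp (u • W))
      (W * (exp (t • W) * R * exp (t • W)) + exp (t • W) * R * exp (t • W) * W) t := by
  refine (((hasDerivAt_exp_smul_const' W t).mul_const R).mul
    (hasDerivAt_exp_smul_const W t)).congr_deriv ?_
  simp only [mul_assoc]

theorem intervalIntegral_trace_mul {f : ℝ → Matrix ι ι ℝ} {a b : ℝ}
    (hf : IntervalIntegrable f volume a b) (L R : Matrix ι ι ℝ) :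
    ∫ s in a..b, trace (L * f s * R) = trace (L * (∫ s in a..b, f s) * R) :=
  ((traceLinearMap ι ℝ ℝ).toContinuousLinearMap.comp
    (ContinuousLinearMap.mulLeftRight ℝ _ L R)).intervalIntegral_comp_comm hf

theorem PosDef.eq_log_of_log_exp {f : Matrix ι ι ℝ → Matrix ι ι ℝ}
    (hf : ∀ S : Matrix ι ι ℝ, S.IsSymm → f (exp S) = S) {B : Matrix ι ι ℝ} (hB : B.PosDef) :
    f B = CFC.log B := by
  conv_lhs => rw [← CFC.exp_log B hB.isStrictlyPositive]
  exact hf _ (isHermitian_iff_isSymm.1 IsSelfAdjoint.log)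

noncomputable def logResolvent (B : Matrix ι ι ℝ) (s : ℝ) : Matrix ι ι ℝ := (s • (B - 1) + 1)⁻¹

section logResolvent

variable {B : Matrix ι ι ℝ} {s : ℝ}

theorem PosDef.smul_sub_one_mul_logResolvent (hB : B.PosDef) (hs : s ∈ Icc (0 : ℝ) 1) :
    s • (B - 1) * logResolvent B s = 1 - logResolvent B s := by
  rw [eq_sub_iff_add_eq, ← add_one_mul, logResolvent,
    mul_nonsing_inv _ (hB.smul_sub_one_add_one hs).det_pos.ne'.isUnit]

theorem PosDef.continuousOn_logResolvent (hB : B.PosDef) :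
    ContinuousOn (logResolvent B) (Icc 0 1) :=
  ContinuousOn.matrix_inv (by fun_prop) fun _ hs =>
    (hB.smul_sub_one_add_one hs).det_pos.ne'.isUnit

theorem IsHermitian.cfc_sub_one (hB : B.IsHermitian) : cfc (fun z : ℝ => z - 1) B = B - 1 := by
  rw [cfc_sub (R := ℝ) (fun z : ℝ => z) (fun _ : ℝ => (1 : ℝ)) B
    (finite_real_spectrum.continuousOn _) (finite_real_spectrum.continuousOn _),
    cfc_id' ℝ B hB.isSelfAdjoint, cfc_const_one ℝ B]

theorem PosDef.cfc_eq_logResolvent (hB : B.PosDef) (hs : s ∈ Icc (0 : ℝ) 1) :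
    cfc (fun z => (s * (z - 1) + 1)⁻¹) B = logResolvent B s := by
  rw [cfc_inv _ _ (fun z hz => (Real.sub_one_mul_add_one_pos
      (hB.isStrictlyPositive.spectrum_pos hz) hs).ne') (finite_real_spectrum.continuousOn _),
    cfc_add_const _ _ _ (finite_real_spectrum.continuousOn _),
    cfc_const_mul _ _ _ (finite_real_spectrum.continuousOn _), hB.isHermitian.cfc_sub_one,
    logResolvent, nonsing_inv_eq_ringInverse, Algebra.algebraMap_eq_smul_one, one_smul]

theorem PosDef.commute_log_logResolvent (hB : B.PosDef) (hs : s ∈ Icc (0 : ℝ) 1) :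
    Commute (CFC.log B) (logResolvent B s) :=
  hB.cfc_eq_logResolvent hs ▸ cfc_commute_cfc _ _ B

theorem PosDef.log_eq_intervalIntegral (hB : B.PosDef) :
    CFC.log B = ∫ s in (0 : ℝ)..1, (B - 1) * logResolvent B s := by
  have hspec : ∀ z ∈ spectrum ℝ B, 0 < z := fun z hz => hB.isStrictlyPositive.spectrum_pos hz
  have hcont : ContinuousOn (Function.uncurry fun (s z : ℝ) => (z - 1) * (s * (z - 1) + 1)⁻¹)
      (Icc 0 1 ×ˢ spectrum ℝ B) :=
    ContinuousOn.mul (by fun_prop) (ContinuousOn.inv₀ (by fun_prop) fun p hp =>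
      (Real.sub_one_mul_add_one_pos (hspec p.2 hp.2) hp.1).ne')
  obtain ⟨C, hC⟩ := (isCompact_Icc.prod (spectrum.isCompact B)).exists_bound_of_continuousOn hcont
  calc CFC.log B = cfc (fun z => ∫ s in (0 : ℝ)..1, (z - 1) * (s * (z - 1) + 1)⁻¹) B :=
        cfc_congr fun z hz => Real.log_eq_intervalIntegral (hspec z hz)
    _ = cfc (fun z => ∫ s in Ioc (0 : ℝ) 1, (z - 1) * (s * (z - 1) + 1)⁻¹) B := by
        simp_rw [intervalIntegral.integral_of_le zero_le_one]
    _ = ∫ s in Ioc (0 : ℝ) 1, cfc (fun z => (z - 1) * (s * (z - 1) + 1)⁻¹) B :=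
        cfc_setIntegral measurableSet_Ioc _ (fun _ => C) B
          (hcont.mono (prod_mono Ioc_subset_Icc_self le_rfl))
          (ae_restrict_of_forall_mem measurableSet_Ioc fun s hs z hz =>
            hC (s, z) ⟨Ioc_subset_Icc_self hs, hz⟩)
          (hasFiniteIntegral_const C)
    _ = ∫ s in (0 : ℝ)..1, (B - 1) * logResolvent B s := by
        rw [intervalIntegral.integral_of_le zero_le_one]
        refine setIntegral_congr_fun measurableSet_Ioc fun s hs => ?_
        rw [cfc_mul _ _ B (finite_real_spectrum.continuousOn _)
            (finite_real_spectrum.continuousOn _), hB.isHermitian.cfc_sub_one,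
          hB.cfc_eq_logResolvent (Ioc_subset_Icc_self hs)]

theorem PosDef.intervalIntegral_logResolvent_mul_self (hB : B.PosDef) :
    ∫ s in (0 : ℝ)..1, logResolvent B s * logResolvent B s = B⁻¹ := by
  have hK := hB.continuousOn_logResolvent
  have hderiv : ∀ s ∈ uIcc (0 : ℝ) 1, HasDerivAt (fun u => u • logResolvent B u)
      (logResolvent B s * logResolvent B s) s := by
    intro s hs
    rw [uIcc_of_le zero_le_one] at hs
    have hN : HasDerivAt (fun u : ℝ => u • (B - 1) + 1) (B - 1) s := by
      simpa using ((hasDerivAt_id s).smul_const (B - 1)).add_const (1 : Matrix ι ι ℝ)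
    refine ((hasDerivAt_id s).smul
      (hN.matrix_inv (hB.smul_sub_one_add_one hs).det_pos.ne'.isUnit)).congr_deriv ?_
    have h := hB.smul_sub_one_mul_logResolvent hs
    simp only [logResolvent] at h ⊢
    set K := (s • (B - 1) + 1)⁻¹
    have hsmul : s • -(K * (B - 1) * K) = -(K * (s • (B - 1) * K)) := by
      simp only [mul_smul_comm, smul_mul_assoc, mul_assoc, smul_neg]
    rw [id, one_smul, hsmul, h]
    noncomm_ring
  rw [intervalIntegral.integral_eq_sub_of_hasDerivAt hderiv
    ((hK.mul hK).mono (uIcc_of_le zero_le_one).subset).intervalIntegrable]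
  simp [logResolvent]

theorem hasDerivAt_sub_one_mul_logResolvent {B : ℝ → Matrix ι ι ℝ} {B' : Matrix ι ι ℝ} {t : ℝ}
    (hB : HasDerivAt B B' t) (hpos : (B t).PosDef) (hs : s ∈ Icc (0 : ℝ) 1) :
    HasDerivAt (fun u => (B u - 1) * logResolvent (B u) s)
      (logResolvent (B t) s * B' * logResolvent (B t) s) t := by
  have hN : HasDerivAt (fun u => s • (B u - 1) + 1) (s • B') t :=
    ((hB.sub_const 1).const_smul s).add_const 1
  refine ((hB.sub_const 1).mul
    (hN.matrix_inv (hpos.smul_sub_one_add_one hs).det_pos.ne'.isUnit)).congr_deriv ?_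
  -- `s (B - 1) K = 1 - K` collapses the product rule to `K B' K`
  have h := hpos.smul_sub_one_mul_logResolvent hs
  simp only [logResolvent] at h ⊢
  set K := (s • (B t - 1) + 1)⁻¹
  have hsmul : (B t - 1) * (K * (s • B') * K) = (s • (B t - 1) * K) * B' * K := by
    simp only [mul_smul_comm, smul_mul_assoc, mul_assoc]
  rw [mul_neg, hsmul, h]
  noncomm_ring

end logResolvent

theorem hasDerivAt_log_comp {B B' : ℝ → Matrix ι ι ℝ} (hB : ∀ t, HasDerivAt B (B' t) t)
    (hB' : Continuous B') (hpos : ∀ t, (B t).PosDef) (t₀ : ℝ) :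
    HasDerivAt (fun t => CFC.log (B t))
      (∫ s in (0 : ℝ)..1, logResolvent (B t₀) s * B' t₀ * logResolvent (B t₀) s) t₀ := by
  have hBc : Continuous B := continuous_iff_continuousAt.2 fun t => (hB t).continuousAt
  have hI : uIoc (0 : ℝ) 1 ⊆ Icc 0 1 := by
    rw [uIoc_of_le zero_le_one]; exact Ioc_subset_Icc_self
  have hK : ContinuousOn (fun p : ℝ × ℝ => logResolvent (B p.1) p.2) (univ ×ˢ Icc 0 1) :=
    ContinuousOn.matrix_inv
      ((continuous_snd.smul ((hBc.comp continuous_fst).sub continuous_const)).add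
        continuous_const).continuousOn fun p hp =>
      ((hpos p.1).smul_sub_one_add_one hp.2).det_pos.ne'.isUnit
  have hKs : ∀ t, ContinuousOn (logResolvent (B t)) (Icc 0 1) := fun t =>
    (hpos t).continuousOn_logResolvent
  have hF' : ContinuousOn (fun p : ℝ × ℝ =>
      logResolvent (B p.1) p.2 * B' p.1 * logResolvent (B p.1) p.2) (univ ×ˢ Icc 0 1) :=
    (hK.mul (hB'.comp continuous_fst).continuousOn).mul hK
  -- the `t`-derivative of the integrand is jointly continuous, hence bounded near `t₀` uniformly
  -- in `s`: this constant dominates it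
  obtain ⟨C, hC⟩ := (isCompact_closedBall t₀ 1 |>.prod isCompact_Icc).exists_bound_of_continuousOn
    (hF'.mono (prod_mono (subset_univ _) le_rfl))
  have hlog : (fun t => CFC.log (B t))
      = fun t => ∫ s in (0 : ℝ)..1, (B t - 1) * logResolvent (B t) s :=
    funext fun t => (hpos t).log_eq_intervalIntegral
  rw [hlog]
  refine (intervalIntegral.hasDerivAt_integral_of_dominated_loc_of_deriv_le (bound := fun _ => C)
    (F := fun t s => (B t - 1) * logResolvent (B t) s)
    (F' := fun t s => logResolvent (B t) s * B' t * logResolvent (B t) s)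
    (Metric.ball_mem_nhds t₀ one_pos) ?_ ?_ ?_ ?_ intervalIntegrable_const ?_).2
  · exact .of_forall fun t =>
      ((continuousOn_const.mul (hKs t)).mono hI).aestronglyMeasurable measurableSet_uIoc
  · exact (continuousOn_const.mul (hKs t₀)).intervalIntegrable_of_Icc zero_le_one
  · exact ((((hKs t₀).mul continuousOn_const).mul (hKs t₀)).mono hI).aestronglyMeasurable
      measurableSet_uIoc
  · exact .of_forall fun s hs t ht => hC (t, s) ⟨Metric.ball_subset_closedBall ht, hI hs⟩
  · exact .of_forall fun s hs t _ =>
      hasDerivAt_sub_one_mul_logResolvent (hB t) (hpos t) (hI hs)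

theorem hasDerivAt_trace_log_mul_log {B B' : ℝ → Matrix ι ι ℝ}
    (hB : ∀ t, HasDerivAt B (B' t) t) (hB' : Continuous B') (hpos : ∀ t, (B t).PosDef)
    (t₀ : ℝ) :
    HasDerivAt (fun t => trace (CFC.log (B t) * CFC.log (B t)))
      (2 * trace (CFC.log (B t₀) * (B t₀)⁻¹ * B' t₀)) t₀ := by
  set L := CFC.log (B t₀)
  set K := logResolvent (B t₀)
  have hG := hasDerivAt_log_comp hB hB' hpos t₀
  refine ((traceLinearMap ι ℝ ℝ).toContinuousLinearMap.hasFDerivAt.comp_hasDerivAt t₀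
    (hG.mul hG)).congr_deriv ?_
  have hK := (hpos t₀).continuousOn_logResolvent
  have hcycle : ∀ s ∈ uIcc (0 : ℝ) 1,
      trace (L * (K s * B' t₀ * K s) * 1) = trace (L * (K s * K s) * B' t₀) := by
    intro s hs
    rw [uIcc_of_le zero_le_one] at hs
    have hLK : Commute L (K s) := (hpos t₀).commute_log_logResolvent hs
    calc trace (L * (K s * B' t₀ * K s) * 1) = trace (K s * (L * K s * B' t₀)) := by
          rw [mul_one, trace_mul_comm (K s)]; simp only [mul_assoc]
      _ = trace (L * (K s * K s) * B' t₀) := by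
          rw [← mul_assoc, ← mul_assoc, ← hLK.eq]; simp only [mul_assoc]
  have htrace : trace (L * ∫ s in (0 : ℝ)..1, K s * B' t₀ * K s)
      = trace (L * (B t₀)⁻¹ * B' t₀) :=
    calc trace (L * ∫ s in (0 : ℝ)..1, K s * B' t₀ * K s)
        = ∫ s in (0 : ℝ)..1, trace (L * (K s * B' t₀ * K s) * 1) := by
          rw [intervalIntegral_trace_mul (f := fun s => K s * B' t₀ * K s)
            (((hK.mul continuousOn_const).mul hK).intervalIntegrable_of_Icc zero_le_one), mul_one]
      _ = ∫ s in (0 : ℝ)..1, trace (L * (K s * K s) * B' t₀) :=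
          intervalIntegral.integral_congr hcycle
      _ = trace (L * (B t₀)⁻¹ * B' t₀) := by
          rw [intervalIntegral_trace_mul (f := fun s => K s * K s)
            ((hK.mul hK).intervalIntegrable_of_Icc zero_le_one),
            (hpos t₀).intervalIntegral_logResolvent_mul_self]
  simp only [LinearMap.coe_toContinuousLinearMap', traceLinearMap_apply, trace_add]
  rw [trace_mul_comm, ← two_mul]
  exact congrArg (2 * ·) htrace

theorem PosDef.hasDerivAt_trace_log_sq_conj_exp {R W : Matrix ι ι ℝ} (hR : R.PosDef)
    (hW : W.IsSymm) :
    HasDerivAt (fun t : ℝ => trace (CFC.log (exp (t • W) * R * exp (t • W)) *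
      CFC.log (exp (t • W) * R * exp (t • W)))) (4 * trace (CFC.log R * W)) 0 := by
  have hB := hasDerivAt_exp_smul_mul_mul_exp_smul R W
  have hBc : Continuous fun t : ℝ => exp (t • W) * R * exp (t • W) :=
    continuous_iff_continuousAt.2 fun t => (hB t).continuousAt
  have hpos : ∀ t : ℝ, (exp (t • W) * R * exp (t • W)).PosDef := fun t =>
    hR.mul_mul_of_isSymm (hW.smul t).exp ((isUnit_iff_isUnit_det _).1 (isUnit_exp _))
  have hcomm : Commute (CFC.log R) R := by
    simpa only [CFC.exp_log R hR.isStrictlyPositive] using (Commute.refl (CFC.log R)).exp_right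
  convert hasDerivAt_trace_log_mul_log hB
    ((continuous_const.mul hBc).add (hBc.mul continuous_const)) hpos 0 using 1
  simp only [zero_smul, exp_zero, one_mul, mul_one]
  rw [hcomm.trace_mul_inv_mul_add hR.det_pos.ne'.isUnit]
  ring

end Matrix

theorem posDef_msqrt {n : ℕ} {P : Matrix (Fin n) (Fin n) ℝ} (hP : P.PosDef) :
    (msqrt P).PosDef := by
  rw [msqrt, dif_pos hP]
  exact hP.isStrictlyPositive.sqrt.posDef

theorem deriv_trace_log_sq_general (n : ℕ)
    (mlog : Matrix (Fin n) (Fin n) ℝ → Matrix (Fin n) (Fin n) ℝ)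
    (hlog_exp : ∀ S : Matrix (Fin n) (Fin n) ℝ, S.IsSymm → mlog (NormedSpace.exp S) = S)
    (hsim : ∀ A B : Matrix (Fin n) (Fin n) ℝ, IsUnit A.det → B.PosDef →
      mlog (A * B * A⁻¹) = A * mlog B * A⁻¹)
    (P Q V : Matrix (Fin n) (Fin n) ℝ) (hP : P.PosDef) (hQ : Q.PosDef) (hV : V.IsSymm)
    (φ : ℝ → Matrix (Fin n) (Fin n) ℝ)
    (hφ : φ = fun t => Q⁻¹ * (msqrt P * NormedSpace.exp (t • V) * msqrt P)) :
    deriv (fun t : ℝ => Matrix.trace (mlog (φ t) * mlog (φ t))) 0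
      = -2 * Matrix.trace (mlog ((msqrt P)⁻¹ * Q * (msqrt P)⁻¹) * V) := by
  open scoped Matrix.Norms.L2Operator in
  have hS := posDef_msqrt hP
  set S := msqrt P
  have hSdet : IsUnit S.det := hS.det_pos.ne'.isUnit
  have hR : (S * Q⁻¹ * S).PosDef :=
    hQ.inv.mul_mul_of_isSymm (isHermitian_iff_isSymm.1 hS.isHermitian) hSdet
  set R := S * Q⁻¹ * S
  set E := fun t : ℝ => exp (t • (2⁻¹ : ℝ) • V)
  have hφB : ∀ t, trace (mlog (φ t) * mlog (φ t))
      = trace (CFC.log (E t * R * E t) * CFC.log (E t * R * E t)) := fun t => by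
    have hEdet : IsUnit (E t).det := (isUnit_iff_isUnit_det _).1 (isUnit_exp _)
    have hA : IsUnit (Q⁻¹ * S * E t).det := by
      simpa [det_mul] using (hQ.inv.det_pos.ne'.isUnit.mul hSdet).mul hEdet
    have hEE : E t * E t = exp (t • V) := by
      rw [← exp_add_of_commute _ _ (Commute.refl _), ← add_smul, smul_smul]
      congr 2
      ring
    have hφA : φ t = (Q⁻¹ * S * E t) * (E t * R * E t) * (Q⁻¹ * S * E t)⁻¹ := by
      rw [← mul_nonsing_inv_cancel_right (Q⁻¹ * S * E t) (φ t) hA]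
      simp only [hφ, ← hEE, R, mul_assoc]
    have hB : (E t * R * E t).PosDef := hR.mul_mul_of_isSymm ((hV.smul _).smul t).exp hEdet
    rw [hφA, hsim _ _ hA hB, hB.eq_log_of_log_exp hlog_exp, trace_conj_mul_conj hA]
  have hRinv : mlog (S⁻¹ * Q * S⁻¹) = -CFC.log R := by
    have hexp : S⁻¹ * Q * S⁻¹ = exp (-CFC.log R) := by
      rw [Matrix.exp_neg, CFC.exp_log R hR.isStrictlyPositive, Matrix.mul_inv_rev,
        Matrix.mul_inv_rev, nonsing_inv_nonsing_inv Q hQ.det_pos.ne'.isUnit, mul_assoc]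
    rw [hexp, hlog_exp _ (isHermitian_iff_isSymm.1 (IsSelfAdjoint.log (a := R))).neg]
  rw [funext hφB, (hR.hasDerivAt_trace_log_sq_conj_exp (hV.smul _)).deriv, hRinv]
  simp only [mul_smul_comm, trace_smul, neg_mul, trace_neg, smul_eq_mul]
  ring

/-- The derivative at t = 0 of t ↦ tr(log²(φ(t))), where
φ(t) = Q⁻¹ P^{1/2} exp(t S) P^{1/2} for symmetric S, equals
−2 tr(log(P^{−1/2} Q P^{−1/2}) S).  (mlog is the principal matrix logarithm, which in
particular satisfies the similarity property log(A B A⁻¹) = A log(B) A⁻¹.) -/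
theorem deriv_trace_log_sq (n : ℕ)
    (mlog : Matrix (Fin n) (Fin n) ℝ → Matrix (Fin n) (Fin n) ℝ)
    (hexp_log : ∀ A : Matrix (Fin n) (Fin n) ℝ, A.PosDef → NormedSpace.exp (mlog A) = A)
    (hlog_exp : ∀ S : Matrix (Fin n) (Fin n) ℝ, S.IsSymm → mlog (NormedSpace.exp S) = S)
    (hlog_symm : ∀ A : Matrix (Fin n) (Fin n) ℝ, A.PosDef → (mlog A).IsSymm)
    (hsim : ∀ A B : Matrix (Fin n) (Fin n) ℝ, IsUnit A.det → B.PosDef →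
      mlog (A * B * A⁻¹) = A * mlog B * A⁻¹)
    (P Q V : Matrix (Fin n) (Fin n) ℝ) (hP : P.PosDef) (hQ : Q.PosDef) (hV : V.IsSymm)
    (φ : ℝ → Matrix (Fin n) (Fin n) ℝ)
    (hφ : φ = fun t => Q⁻¹ * (msqrt P * NormedSpace.exp (t • V) * msqrt P)) :
    deriv (fun t : ℝ => Matrix.trace (mlog (φ t) * mlog (φ t))) 0
      = -2 * Matrix.trace (mlog ((msqrt P)⁻¹ * Q * (msqrt P)⁻¹) * V) :=
  deriv_trace_log_sq_general n mlog hlog_exp hsim P Q V hP hQ hV φ hφ
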